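/- arXiv:2306.02399 — 2 statements merged into one kernel-verified Lean document; each statement's English description precedes it below -/
import Mathlib

section
/- Let a ≤ b be real numbers and let β ≠ 0. For a Borel probability measure μ supported on [a,b], define the entropic risk measure U_β(μ) = (1/β) · log( ∫_{[a,b]} exp(βx) dμ(x) ). Then for all Borel probability measures μ, ν supported on [a,b] with CDFs F_μ, F_ν: |U_β(μ) − U_β(ν)| ≤ ((exp(|β|(b − a)) − 1)/|β|) · sup_{t∈ℝ} |F_μ(t) − F_ν(t)|. -/
open MeasureTheory

/-- The entropic risk measure with coefficient `β ≠ 0` of a Borel probability measure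
`μ` supported on `[a, b]`: `U_β(μ) = (1/β) log ∫_{[a,b]} exp (β x) dμ(x)`. -/
noncomputable def ERM (β a b : ℝ) (μ : Measure ℝ) : ℝ :=
  (1 / β) * Real.log (∫ x in Set.Icc a b, Real.exp (β * x) ∂μ)

/-!
By the layer-cake formula, `∫ f dμ - ∫ f dν = ∫ (μ {f > t} - ν {f > t}) dt`. For `f x = exp (β x)`
the superlevel sets are half-lines, so the integrand is bounded by the Kolmogorov distance `D` of
`μ` and `ν`, and it vanishes outside the range `[c, c exp (|β| (b - a))]` of `f` on `[a, b]`.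
Hence the two integrals differ by at most `D c (exp (|β| (b - a)) - 1)`; both are at least `c`,
and `log` is `1/c`-Lipschitz on `[c, ∞)`.
-/

open Set Filter ProbabilityTheory

section LayerCake

variable {α : Type*} [MeasurableSpace α] {μ ν : Measure α}

lemma integrableOn_measureReal_setOf_lt [IsFiniteMeasure μ] (f : α → ℝ) {s : Set ℝ}
    (hs : volume s < ⊤) : IntegrableOn (fun t => μ.real {x | t < f x}) s := by
  have hanti : Antitone fun t => μ.real {x | t < f x} :=
    fun t t' htt' => measureReal_mono fun x hx => htt'.trans_lt hx
  refine IntegrableOn.of_bound hs hanti.measurable.aestronglyMeasurable (μ.real univ)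
    (Eventually.of_forall fun t => ?_)
  rw [Real.norm_of_nonneg measureReal_nonneg]
  exact measureReal_mono (subset_univ _)

lemma integral_eq_setIntegral_Ioc_measureReal_lt [IsFiniteMeasure μ] {f : α → ℝ}
    (hf : Measurable f) {d : ℝ} (hfd : ∀ᵐ x ∂μ, f x ∈ Icc 0 d) :
    ∫ x, f x ∂μ = ∫ t in Ioc 0 d, μ.real {x | t < f x} := by
  rw [(Integrable.of_mem_Icc 0 d hf.aemeasurable hfd).integral_eq_integral_meas_lt
    (hfd.mono fun x hx => hx.1)]
  refine setIntegral_eq_of_subset_of_forall_sdiff_eq_zero measurableSet_Ioi Ioc_subset_Ioi_self ?_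
  rintro t ⟨ht0, htd⟩
  have hdt : d < t := lt_of_not_ge fun h => htd ⟨ht0, h⟩
  have hle : ∀ᵐ x ∂μ, f x ≤ t := hfd.mono fun x hx => hx.2.trans hdt.le
  rw [ae_iff] at hle
  rw [measureReal_eq_zero_iff]
  simpa only [not_le] using hle

variable [IsProbabilityMeasure μ] {f : α → ℝ}

lemma le_integral_of_ae_mem_Icc (hf : Measurable f) {c d : ℝ} (h : ∀ᵐ x ∂μ, f x ∈ Icc c d) :
    c ≤ ∫ x, f x ∂μ := by
  calc c = ∫ _, c ∂μ := by rw [integral_const, probReal_univ, one_smul]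
    _ ≤ ∫ x, f x ∂μ := integral_mono_ae (integrable_const c) (.of_mem_Icc c d hf.aemeasurable h)
        (h.mono fun x hx => hx.1)

variable [IsProbabilityMeasure ν]

lemma abs_integral_sub_integral_le_of_mem_Icc_zero (hf : Measurable f) {d M : ℝ}
    (hμ : ∀ᵐ x ∂μ, f x ∈ Icc 0 d) (hν : ∀ᵐ x ∂ν, f x ∈ Icc 0 d)
    (hM : ∀ t, |μ.real {x | t < f x} - ν.real {x | t < f x}| ≤ M) :
    |∫ x, f x ∂μ - ∫ x, f x ∂ν| ≤ M * d := by
  obtain ⟨x, hx⟩ := hμ.exists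
  have hd : 0 ≤ d := hx.1.trans hx.2
  rw [integral_eq_setIntegral_Ioc_measureReal_lt hf hμ,
    integral_eq_setIntegral_Ioc_measureReal_lt hf hν, ← integral_sub
      (integrableOn_measureReal_setOf_lt f measure_Ioc_lt_top)
      (integrableOn_measureReal_setOf_lt f measure_Ioc_lt_top)]
  calc _ ≤ M * volume.real (Ioc 0 d) :=
        norm_setIntegral_le_of_norm_le_const
          (f := fun t => μ.real {x | t < f x} - ν.real {x | t < f x}) measure_Ioc_lt_top
          fun t _ => hM t
    _ = M * d := by rw [Real.volume_real_Ioc_of_le hd, sub_zero]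

lemma abs_integral_sub_integral_le_of_mem_Icc (hf : Measurable f) {c d M : ℝ}
    (hμ : ∀ᵐ x ∂μ, f x ∈ Icc c d) (hν : ∀ᵐ x ∂ν, f x ∈ Icc c d)
    (hM : ∀ t, |μ.real {x | t < f x} - ν.real {x | t < f x}| ≤ M) :
    |∫ x, f x ∂μ - ∫ x, f x ∂ν| ≤ M * (d - c) := by
  have integral_eq_sub_add (ρ : Measure α) [IsProbabilityMeasure ρ]
      (hρ : ∀ᵐ x ∂ρ, f x ∈ Icc c d) : ∫ x, f x ∂ρ = ∫ x, (f x - c) ∂ρ + c := by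
    rw [integral_sub (.of_mem_Icc c d hf.aemeasurable hρ) (integrable_const c), integral_const,
      probReal_univ, one_smul, sub_add_cancel]
  have mem_Icc_sub {ρ : Measure α} (hρ : ∀ᵐ x ∂ρ, f x ∈ Icc c d) :
      ∀ᵐ x ∂ρ, f x - c ∈ Icc 0 (d - c) :=
    hρ.mono fun x hx => ⟨sub_nonneg.mpr hx.1, sub_le_sub_right hx.2 c⟩
  rw [integral_eq_sub_add μ hμ, integral_eq_sub_add ν hν, add_sub_add_right_eq_sub]
  refine abs_integral_sub_integral_le_of_mem_Icc_zero (hf.sub_const c) (mem_Icc_sub hμ)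
    (mem_Icc_sub hν) fun t => ?_
  simpa only [lt_sub_iff_add_lt] using hM (t + c)

end LayerCake

lemma measureReal_Iio_eq_leftLim_cdf (μ : Measure ℝ) [IsProbabilityMeasure μ] (s : ℝ) :
    μ.real (Iio s) = Function.leftLim (cdf μ) s := by
  have hlim_nonneg : 0 ≤ Function.leftLim (cdf μ) s :=
    (cdf_nonneg μ (s - 1)).trans ((monotone_cdf μ).le_leftLim (sub_one_lt s))
  conv_lhs => rw [← measure_cdf μ]
  rw [measureReal_def, StieltjesFunction.measure_Iio _ (tendsto_cdf_atBot μ), sub_zero,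
    ENNReal.toReal_ofReal hlim_nonneg]

noncomputable def kolmogorovDist (μ ν : Measure ℝ) : ℝ :=
  ⨆ t : ℝ, |μ.real (Iic t) - ν.real (Iic t)|

section KolmogorovDist

variable {μ ν : Measure ℝ} [IsProbabilityMeasure μ] [IsProbabilityMeasure ν]

lemma abs_measureReal_Iic_sub_le_kolmogorovDist (s : ℝ) :
    |μ.real (Iic s) - ν.real (Iic s)| ≤ kolmogorovDist μ ν :=
  le_ciSup (f := fun t => |μ.real (Iic t) - ν.real (Iic t)|)
    ⟨1, by
      rintro _ ⟨t, rfl⟩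
      exact abs_sub_le_of_nonneg_of_le measureReal_nonneg measureReal_le_one measureReal_nonneg
        measureReal_le_one⟩ s

lemma kolmogorovDist_nonneg : 0 ≤ kolmogorovDist μ ν :=
  (abs_nonneg _).trans (abs_measureReal_Iic_sub_le_kolmogorovDist (μ := μ) (ν := ν) 0)

lemma abs_measureReal_Ioi_sub_le_kolmogorovDist (s : ℝ) :
    |μ.real (Ioi s) - ν.real (Ioi s)| ≤ kolmogorovDist μ ν := by
  rw [← compl_Iic, probReal_compl_eq_one_sub measurableSet_Iic,
    probReal_compl_eq_one_sub measurableSet_Iic, sub_sub_sub_cancel_left, abs_sub_comm]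
  exact abs_measureReal_Iic_sub_le_kolmogorovDist s

lemma abs_measureReal_Iio_sub_le_kolmogorovDist (s : ℝ) :
    |μ.real (Iio s) - ν.real (Iio s)| ≤ kolmogorovDist μ ν := by
  rw [measureReal_Iio_eq_leftLim_cdf, measureReal_Iio_eq_leftLim_cdf]
  refine le_of_tendsto ((((monotone_cdf μ).tendsto_leftLim s).sub
    ((monotone_cdf ν).tendsto_leftLim s)).abs) (Eventually.of_forall fun t => ?_)
  simp only [cdf_eq_real]
  exact abs_measureReal_Iic_sub_le_kolmogorovDist t

lemma abs_measureReal_setOf_lt_mul_sub_le_kolmogorovDist {β : ℝ} (hβ : β ≠ 0) (s : ℝ) :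
    |μ.real {x | s < β * x} - ν.real {x | s < β * x}| ≤ kolmogorovDist μ ν := by
  rcases hβ.lt_or_gt with hneg | hpos
  · have : {x | s < β * x} = Iio (s / β) := by
      ext x; simp only [mem_ofPred_eq, mem_Iio, lt_div_iff_of_neg hneg, mul_comm]
    rw [this]
    exact abs_measureReal_Iio_sub_le_kolmogorovDist _
  · have : {x | s < β * x} = Ioi (s / β) := by
      ext x; simp only [mem_ofPred_eq, mem_Ioi, div_lt_iff₀ hpos, mul_comm]
    rw [this]
    exact abs_measureReal_Ioi_sub_le_kolmogorovDist _

lemma abs_measureReal_setOf_lt_exp_mul_sub_le_kolmogorovDist {β : ℝ} (hβ : β ≠ 0) (t : ℝ) :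
    |μ.real {x | t < Real.exp (β * x)} - ν.real {x | t < Real.exp (β * x)}| ≤
      kolmogorovDist μ ν := by
  rcases le_or_gt t 0 with ht | ht
  · have : {x | t < Real.exp (β * x)} = univ :=
      eq_univ_of_forall fun x => ht.trans_lt (Real.exp_pos _)
    rw [this, probReal_univ, probReal_univ, sub_self, abs_zero]
    exact kolmogorovDist_nonneg
  · simp only [← Real.log_lt_iff_lt_exp ht]
    exact abs_measureReal_setOf_lt_mul_sub_le_kolmogorovDist hβ _

end KolmogorovDist

lemma mul_mem_Icc_min_of_mem_Icc {a b x : ℝ} (hx : x ∈ Icc a b) (β : ℝ) :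
    β * x ∈ Icc (min (β * a) (β * b)) (min (β * a) (β * b) + |β| * (b - a)) := by
  rcases le_total 0 β with hβ | hβ
  · have := mul_le_mul_of_nonneg_left hx.1 hβ
    have := mul_le_mul_of_nonneg_left hx.2 hβ
    rw [abs_of_nonneg hβ, min_eq_left (by linarith)]
    constructor <;> linarith
  · have := mul_le_mul_of_nonpos_left hx.1 hβ
    have := mul_le_mul_of_nonpos_left hx.2 hβ
    rw [abs_of_nonpos hβ, min_eq_right (by linarith)]
    constructor <;> linarith

lemma Real.abs_log_sub_log_le {c x y : ℝ} (hc : 0 < c) (hx : c ≤ x) (hy : c ≤ y) :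
    |log x - log y| ≤ |x - y| / c := by
  have key {u v : ℝ} (hu : c ≤ u) (hv : c ≤ v) : log u - log v ≤ |u - v| / c := by
    have hu0 := hc.trans_le hu
    have hv0 := hc.trans_le hv
    calc log u - log v = log (u / v) := (log_div hu0.ne' hv0.ne').symm
      _ ≤ u / v - 1 := log_le_sub_one_of_pos (div_pos hu0 hv0)
      _ = (u - v) / v := by field_simp
      _ ≤ |u - v| / v := by gcongr; exact le_abs_self _
      _ ≤ |u - v| / c := by gcongr
  exact abs_sub_le_iff.mpr ⟨key hx hy, abs_sub_comm x y ▸ key hy hx⟩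

lemma ERM_eq_of_ae_mem {β a b : ℝ} {ρ : Measure ℝ} (h : ∀ᵐ x ∂ρ, x ∈ Icc a b) :
    ERM β a b ρ = 1 / β * Real.log (∫ x, Real.exp (β * x) ∂ρ) := by
  rw [ERM, Measure.restrict_eq_self_of_ae_mem h]

theorem erm_lipschitz_sup_general
    (a b : ℝ) (β : ℝ) (hβ : β ≠ 0)
    (μ ν : Measure ℝ) [IsProbabilityMeasure μ] [IsProbabilityMeasure ν]
    (hμ : μ (Set.Icc a b) = 1) (hν : ν (Set.Icc a b) = 1) :
    |ERM β a b μ - ERM β a b ν| ≤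
      ((Real.exp (|β| * (b - a)) - 1) / |β|) *
        ⨆ t : ℝ, |(μ (Set.Iic t)).toReal - (ν (Set.Iic t)).toReal| := by
  set c := Real.exp (min (β * a) (β * b))
  set L := Real.exp (|β| * (b - a))
  have hsupp {ρ : Measure ℝ} [IsProbabilityMeasure ρ] (hρ : ρ (Icc a b) = 1) :
      ∀ᵐ x ∂ρ, x ∈ Icc a b :=
    (ae_mem_iff_measure_eq measurableSet_Icc.nullMeasurableSet).mpr (hρ.trans measure_univ.symm)
  have hrange {ρ : Measure ℝ} [IsProbabilityMeasure ρ] (hρ : ρ (Icc a b) = 1) :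
      ∀ᵐ x ∂ρ, Real.exp (β * x) ∈ Icc c (c * L) := by
    filter_upwards [hsupp hρ] with x hx
    obtain ⟨hlow, hup⟩ := mul_mem_Icc_min_of_mem_Icc hx β
    exact ⟨Real.exp_le_exp.mpr hlow, (Real.exp_le_exp.mpr hup).trans_eq (Real.exp_add _ _)⟩
  have hexp : Measurable fun x => Real.exp (β * x) := by fun_prop
  have hc : 0 < c := Real.exp_pos _
  have hdiff : |∫ x, Real.exp (β * x) ∂μ - ∫ x, Real.exp (β * x) ∂ν| ≤
      kolmogorovDist μ ν * (c * L - c) :=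
    abs_integral_sub_integral_le_of_mem_Icc hexp (hrange hμ) (hrange hν)
      (abs_measureReal_setOf_lt_exp_mul_sub_le_kolmogorovDist hβ)
  rw [ERM_eq_of_ae_mem (hsupp hμ), ERM_eq_of_ae_mem (hsupp hν), ← mul_sub, abs_mul, abs_div,
    abs_one]
  calc 1 / |β| * |Real.log (∫ x, Real.exp (β * x) ∂μ) - Real.log (∫ x, Real.exp (β * x) ∂ν)|
      ≤ 1 / |β| * (kolmogorovDist μ ν * (c * L - c) / c) := by
        gcongr
        exact (Real.abs_log_sub_log_le hc (le_integral_of_ae_mem_Icc hexp (hrange hμ))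
          (le_integral_of_ae_mem_Icc hexp (hrange hν))).trans
          (div_le_div_of_nonneg_right hdiff hc.le)
    _ = (L - 1) / |β| * kolmogorovDist μ ν := by
        field_simp

/-- Lipschitz continuity of the entropic risk measure with respect to the supremum
distance of CDFs, with Lipschitz constant `(exp (|β| (b - a)) - 1) / |β|`. -/
theorem erm_lipschitz_sup
    (a b : ℝ) (hab : a ≤ b) (β : ℝ) (hβ : β ≠ 0)
    (μ ν : Measure ℝ) [IsProbabilityMeasure μ] [IsProbabilityMeasure ν]
    (hμ : μ (Set.Icc a b) = 1) (hν : ν (Set.Icc a b) = 1) :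
    |ERM β a b μ - ERM β a b ν| ≤
      ((Real.exp (|β| * (b - a)) - 1) / |β|) *
        ⨆ t : ℝ, |(μ (Set.Iic t)).toReal - (ν (Set.Iic t)).toReal| :=
  erm_lipschitz_sup_general a b β hβ μ ν hμ hν
end

section
/- Let a ≤ b be real numbers and let β ≠ 0. For a Borel probability measure μ supported on [a,b], define the entropic risk measure U_β(μ) = (1/β) · log( ∫_{[a,b]} exp(βx) dμ(x) ). Then for all Borel probability measures μ, ν supported on [a,b] with CDFs F_μ, F_ν: |U_β(μ) − U_β(ν)| ≤ exp(|β|(b − a)) · ∫_ℝ |F_μ(t) − F_ν(t)| dt. -/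
open MeasureTheory

/-!
Integrating `1{x ≤ t} g'(t)` over `x ∼ μ` and `t ∈ [a, b]` in both orders (Fubini) gives
`∫ g dμ = g b - ∫_a^b g' F_μ`, hence `|∫ g dμ - ∫ g dν| ≤ sup |g'| · ‖F_μ - F_ν‖₁`.
For `g = exp (β ·)` with `m ≤ βx ≤ M` on `[a, b]`, the derivative is at most `|β| e^M` and both
integrals are at least `e^m`, where `log` is `e^(-m)`-Lipschitz. The factor `|β|` cancels against
`1/β`, and `M - m = |β| (b - a)`.
-/

open ProbabilityTheory Set

section Representation

variable {μ : Measure ℝ} {a b : ℝ} {g g' : ℝ → ℝ}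

lemma integrable_of_continuousOn_of_ae_mem_Icc [IsFiniteMeasure μ]
    (hμ : ∀ᵐ x ∂μ, x ∈ Icc a b) (hg : ContinuousOn g (Icc a b)) : Integrable g μ := by
  simpa only [IntegrableOn, Measure.restrict_eq_self_of_ae_mem hμ] using
    hg.integrableOn_compact (μ := μ) isCompact_Icc

variable (hg : ContinuousOn g (Icc a b)) (hg' : ∀ t ∈ Ioo a b, HasDerivAt g (g' t) t)
  (hint : IntegrableOn g' (Icc a b))
include hg hg' hint

lemma setIntegral_Icc_indicator_Ici_eq_sub {x : ℝ} (hx : x ∈ Icc a b) :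
    ∫ t in Icc a b, (Ici x).indicator g' t = g b - g x := by
  have hIcc : Icc a b ∩ Ici x = Icc x b := by
    ext t; simp only [mem_inter_iff, mem_Icc, mem_Ici]; grind [hx.1]
  rw [setIntegral_indicator measurableSet_Ici, hIcc, integral_Icc_eq_integral_Ioc,
    ← intervalIntegral.integral_of_le hx.2]
  exact intervalIntegral.integral_eq_sub_of_hasDerivAt_of_le hx.2
    (hg.mono (Icc_subset_Icc_left hx.1)) (fun t ht ↦ hg' t ⟨hx.1.trans_lt ht.1, ht.2⟩)
    ((intervalIntegrable_iff_integrableOn_Icc_of_le hx.2).2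
      (hint.mono_set (Icc_subset_Icc_left hx.1)))

theorem integral_eq_sub_setIntegral_deriv_mul_measureReal_Iic [IsFiniteMeasure μ]
    (hμ : ∀ᵐ x ∂μ, x ∈ Icc a b) :
    ∫ x, g x ∂μ = g b * μ.real univ - ∫ t in Icc a b, g' t * μ.real (Iic t) := by
  have hswap : ∫ x, (∫ t in Icc a b, (Ici x).indicator g' t) ∂μ
      = ∫ t in Icc a b, (∫ x, (Ici x).indicator g' t ∂μ) :=
    integral_integral_swap (f := fun x t ↦ (Ici x).indicator g' t) <|
      (hint.comp_snd μ).indicator (measurableSet_le measurable_fst measurable_snd)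
  have inner_t : ∫ x, (∫ t in Icc a b, (Ici x).indicator g' t) ∂μ = ∫ x, (g b - g x) ∂μ :=
    integral_congr_ae <| hμ.mono fun _ ↦ setIntegral_Icc_indicator_Ici_eq_sub hg hg' hint
  have inner_x (t : ℝ) : ∫ x, (Ici x).indicator g' t ∂μ = g' t * μ.real (Iic t) := by
    have : (fun x ↦ (Ici x).indicator g' t) = (Iic t).indicator fun _ ↦ g' t := by
      ext x; simp [indicator]
    rw [this, integral_indicator_const _ measurableSet_Iic, smul_eq_mul, mul_comm]
  rw [integral_sub (integrable_const _) (integrable_of_continuousOn_of_ae_mem_Icc hμ hg),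
    integral_const, smul_eq_mul, mul_comm] at inner_t
  simp only [inner_x] at hswap
  linarith

end Representation

section CDF

variable {μ ν : Measure ℝ} [IsProbabilityMeasure μ] [IsProbabilityMeasure ν] {a b t : ℝ}

lemma cdf_eq_zero_of_lt (hμ : ∀ᵐ x ∂μ, x ∈ Icc a b) (ht : t < a) : cdf μ t = 0 := by
  rw [cdf_eq_real, measureReal_eq_zero_iff, measure_eq_zero_iff_ae_notMem]
  exact hμ.mono fun x hx hxt ↦ (hx.1.trans hxt).not_gt ht

lemma cdf_eq_one_of_le (hμ : ∀ᵐ x ∂μ, x ∈ Icc a b) (ht : b ≤ t) : cdf μ t = 1 := by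
  rw [cdf_eq_real, measureReal_def,
    (mem_ae_iff_prob_eq_one measurableSet_Iic).1 (hμ.mono fun x hx ↦ hx.2.trans ht),
    ENNReal.toReal_one]

lemma setIntegral_Icc_abs_cdf_sub_eq_integral (hμ : ∀ᵐ x ∂μ, x ∈ Icc a b)
    (hν : ∀ᵐ x ∂ν, x ∈ Icc a b) :
    ∫ t in Icc a b, |cdf μ t - cdf ν t| = ∫ t, |cdf μ t - cdf ν t| := by
  refine setIntegral_eq_integral_of_forall_compl_eq_zero fun t ht ↦ ?_
  rcases lt_or_ge t a with hta | hat
  · simp [cdf_eq_zero_of_lt hμ hta, cdf_eq_zero_of_lt hν hta]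
  · have hbt : b ≤ t := (lt_of_not_ge fun htb ↦ ht ⟨hat, htb⟩).le
    simp [cdf_eq_one_of_le hμ hbt, cdf_eq_one_of_le hν hbt]

theorem abs_integral_sub_integral_le_mul_integral_abs_cdf_sub {g g' : ℝ → ℝ}
    (hμ : ∀ᵐ x ∂μ, x ∈ Icc a b) (hν : ∀ᵐ x ∂ν, x ∈ Icc a b) (hg : ContinuousOn g (Icc a b))
    (hg' : ∀ t ∈ Ioo a b, HasDerivAt g (g' t) t) (hint : IntegrableOn g' (Icc a b)) {L : ℝ}
    (hL : ∀ t ∈ Icc a b, |g' t| ≤ L) :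
    |∫ x, g x ∂μ - ∫ x, g x ∂ν| ≤ L * ∫ t, |cdf μ t - cdf ν t| := by
  have hint_cdf (ρ : Measure ℝ) :
      IntegrableOn (fun t ↦ g' t * cdf ρ t) (Icc a b) :=
    hint.mul_bdd (cdf ρ).mono.measurable.aestronglyMeasurable <| ae_of_all _ fun t ↦ by
      rw [Real.norm_of_nonneg (cdf_nonneg ρ t)]; exact cdf_le_one ρ t
  have hdiff : ∫ x, g x ∂μ - ∫ x, g x ∂ν = ∫ t in Icc a b, g' t * (cdf ν t - cdf μ t) := by
    simp only [integral_eq_sub_setIntegral_deriv_mul_measureReal_Iic hg hg' hint hμ,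
      integral_eq_sub_setIntegral_deriv_mul_measureReal_Iic hg hg' hint hν, probReal_univ,
      ← cdf_eq_real, mul_sub, integral_sub (hint_cdf ν) (hint_cdf μ)]
    ring
  have hint_abs : IntegrableOn (fun t ↦ |cdf μ t - cdf ν t|) (Icc a b) :=
    (((cdf μ).mono.locallyIntegrable.sub (cdf ν).mono.locallyIntegrable).integrableOn_isCompact
      isCompact_Icc).abs
  calc |∫ x, g x ∂μ - ∫ x, g x ∂ν|
      ≤ ∫ t in Icc a b, |g' t * (cdf ν t - cdf μ t)| := hdiff ▸ abs_integral_le_integral_abs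
    _ ≤ ∫ t in Icc a b, L * |cdf μ t - cdf ν t| := by
      refine integral_mono_of_nonneg (ae_of_all _ fun t ↦ abs_nonneg _) (hint_abs.const_mul L)
        (ae_restrict_of_forall_mem measurableSet_Icc fun t ht ↦ ?_)
      simp only [abs_mul, abs_sub_comm (cdf ν t)]
      exact mul_le_mul_of_nonneg_right (hL t ht) (abs_nonneg _)
    _ = L * ∫ t, |cdf μ t - cdf ν t| := by
      rw [integral_const_mul, setIntegral_Icc_abs_cdf_sub_eq_integral hμ hν]

end CDF

lemma Real.abs_log_sub_log_le_div {m x y : ℝ} (hm : 0 < m) (hx : m ≤ x) (hy : m ≤ y) :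
    |Real.log x - Real.log y| ≤ |x - y| / m := by
  have := (convex_Ici m).norm_image_sub_le_of_norm_hasDerivWithin_le (f := Real.log)
    (f' := fun t ↦ t⁻¹) (fun t ht ↦ (Real.hasDerivAt_log (hm.trans_le ht).ne').hasDerivWithinAt)
    (fun t ht ↦ by rw [norm_inv, Real.norm_of_nonneg (hm.le.trans ht)]; exact inv_anti₀ hm ht)
    hy hx
  simpa only [Real.norm_eq_abs, div_eq_inv_mul] using this

section Exponential

open Real

variable {μ ν : Measure ℝ} [IsProbabilityMeasure μ] [IsProbabilityMeasure ν] {a b β : ℝ}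

lemma exp_mul_mem_Icc_of_mem_Icc {x : ℝ} (hx : x ∈ Icc a b) :
    exp (β * x) ∈ Icc (exp (β * a ⊓ β * b)) (exp (β * a ⊔ β * b)) := by
  have : β * x ∈ uIcc (β * a) (β * b) :=
    image_const_mul_uIcc β a b ▸ mem_image_of_mem _ (Icc_subset_uIcc hx)
  exact ⟨exp_le_exp.2 this.1, exp_le_exp.2 this.2⟩

lemma exp_inf_le_integral_exp_mul (hμ : ∀ᵐ x ∂μ, x ∈ Icc a b) :
    exp (β * a ⊓ β * b) ≤ ∫ x, exp (β * x) ∂μ :=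
  calc exp (β * a ⊓ β * b) = ∫ _, exp (β * a ⊓ β * b) ∂μ := by simp
    _ ≤ ∫ x, exp (β * x) ∂μ :=
      integral_mono_ae (integrable_const _)
        (integrable_of_continuousOn_of_ae_mem_Icc hμ (by fun_prop))
        (hμ.mono fun _ hx ↦ (exp_mul_mem_Icc_of_mem_Icc hx).1)

lemma abs_integral_exp_mul_sub_le (hμ : ∀ᵐ x ∂μ, x ∈ Icc a b) (hν : ∀ᵐ x ∂ν, x ∈ Icc a b) :
    |∫ x, exp (β * x) ∂μ - ∫ x, exp (β * x) ∂ν|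
      ≤ |β| * exp (β * a ⊔ β * b) * ∫ t, |cdf μ t - cdf ν t| := by
  refine abs_integral_sub_integral_le_mul_integral_abs_cdf_sub (g' := fun t ↦ β * exp (β * t))
    hμ hν (by fun_prop) (fun t _ ↦ ?_)
    (by fun_prop : Continuous _).integrableOn_Icc fun t ht ↦ ?_
  · simpa [mul_comm] using ((hasDerivAt_id t).const_mul β).exp
  · rw [abs_mul, abs_of_pos (exp_pos _)]
    exact mul_le_mul_of_nonneg_left (exp_mul_mem_Icc_of_mem_Icc ht).2 (abs_nonneg β)

end Exponential

theorem erm_lipschitz_l1_general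
    (a b : ℝ) (hab : a ≤ b) (β : ℝ)
    (μ ν : Measure ℝ) [IsProbabilityMeasure μ] [IsProbabilityMeasure ν]
    (hμ : μ (Set.Icc a b) = 1) (hν : ν (Set.Icc a b) = 1) :
    |ERM β a b μ - ERM β a b ν| ≤
      Real.exp (|β| * (b - a)) *
        ∫ t : ℝ, |(μ (Set.Iic t)).toReal - (ν (Set.Iic t)).toReal| := by
  have hμ' : ∀ᵐ x ∂μ, x ∈ Icc a b := (mem_ae_iff_prob_eq_one measurableSet_Icc).2 hμ
  have hν' : ∀ᵐ x ∂ν, x ∈ Icc a b := (mem_ae_iff_prob_eq_one measurableSet_Icc).2 hν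
  have hratio :
      Real.exp (β * a ⊔ β * b) / Real.exp (β * a ⊓ β * b) = Real.exp (|β| * (b - a)) := by
    rw [← Real.exp_sub, max_sub_min_eq_abs, ← mul_sub, abs_mul, abs_of_nonneg (sub_nonneg.2 hab)]
  simp only [← measureReal_def, ← cdf_eq_real]
  rw [ERM, ERM, Measure.restrict_eq_self_of_ae_mem hμ', Measure.restrict_eq_self_of_ae_mem hν']
  calc _ = |β|⁻¹ *
        |Real.log (∫ x, Real.exp (β * x) ∂μ) - Real.log (∫ x, Real.exp (β * x) ∂ν)| := by
        rw [← mul_sub, abs_mul, one_div, abs_inv]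
    _ ≤ |β|⁻¹ * ((|β| * Real.exp (β * a ⊔ β * b) * ∫ t, |cdf μ t - cdf ν t|) /
          Real.exp (β * a ⊓ β * b)) := by
        gcongr
        refine (Real.abs_log_sub_log_le_div (Real.exp_pos _) (exp_inf_le_integral_exp_mul hμ')
          (exp_inf_le_integral_exp_mul hν')).trans ?_
        gcongr
        exact abs_integral_exp_mul_sub_le hμ' hν'
    _ = |β|⁻¹ * |β| * Real.exp (|β| * (b - a)) * ∫ t, |cdf μ t - cdf ν t| := by
        rw [← hratio]; ring
    _ ≤ Real.exp (|β| * (b - a)) * ∫ t, |cdf μ t - cdf ν t| := by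
        gcongr
        exact mul_le_of_le_one_left (Real.exp_pos _).le inv_mul_le_one

/-- Lipschitz continuity of the entropic risk measure with respect to the ℓ1 distance
of CDFs, with Lipschitz constant `exp (|β| (b - a))`. -/
theorem erm_lipschitz_l1
    (a b : ℝ) (hab : a ≤ b) (β : ℝ) (hβ : β ≠ 0)
    (μ ν : Measure ℝ) [IsProbabilityMeasure μ] [IsProbabilityMeasure ν]
    (hμ : μ (Set.Icc a b) = 1) (hν : ν (Set.Icc a b) = 1) :
    |ERM β a b μ - ERM β a b ν| ≤
      Real.exp (|β| * (b - a)) *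
        ∫ t : ℝ, |(μ (Set.Iic t)).toReal - (ν (Set.Iic t)).toReal| :=
  erm_lipschitz_l1_general a b hab β μ ν hμ hν
end
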